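/- The second-order retraction Σ + ξ + ½ ξ Σ⁻¹ ξ is always symmetric positive semidefinite for symmetric ξ, since it equals ½ Σ + ½ (Σ + ξ) Σ⁻¹ (Σ + ξ), and it is positive definite. -/

import Mathlib

open Matrix
open scoped ComplexOrder

namespace Matrix

variable {m : Type*} [Fintype m] [DecidableEq m]

theorem add_mul_nonsing_inv_mul_add {R : Type*} [CommRing R] {S : Matrix m m R}
    (hS : IsUnit S.det) (ξ : Matrix m m R) :
    (S + ξ) * S⁻¹ * (S + ξ) = S + 2 • ξ + ξ * S⁻¹ * ξ := by
  rw [add_mul, add_mul, mul_nonsing_inv S hS, one_mul, mul_add, mul_assoc ξ, nonsing_inv_mul S hS,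
    mul_one, two_nsmul]
  abel

variable {𝕜 : Type*} [RCLike 𝕜]

noncomputable def secondOrderRetraction (S ξ : Matrix m m 𝕜) : Matrix m m 𝕜 :=
  S + ξ + (1 / 2 : 𝕜) • (ξ * S⁻¹ * ξ)

theorem secondOrderRetraction_eq {S : Matrix m m 𝕜} (hS : IsUnit S.det) (ξ : Matrix m m 𝕜) :
    secondOrderRetraction S ξ = (1 / 2 : 𝕜) • S + (1 / 2 : 𝕜) • ((S + ξ) * S⁻¹ * (S + ξ)) := by
  rw [secondOrderRetraction, add_mul_nonsing_inv_mul_add hS]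
  module

theorem PosDef.secondOrderRetraction {S ξ : Matrix m m 𝕜} (hS : S.PosDef) (hξ : ξ.IsHermitian) :
    (secondOrderRetraction S ξ).PosDef := by
  have hhalf : (0 : 𝕜) < 1 / 2 := by norm_num
  have hsquare : ((S + ξ) * S⁻¹ * (S + ξ)).PosSemidef := by
    simpa only [(hS.isHermitian.add hξ).eq] using
      hS.posSemidef.inv.conjTranspose_mul_mul_same (S + ξ)
  rw [secondOrderRetraction_eq ((isUnit_iff_isUnit_det S).mp hS.isUnit)]
  exact (hS.smul hhalf).add_posSemidef (hsquare.smul hhalf.le)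

end Matrix

theorem stmt13_general {n : ℕ} (S ξ : Matrix (Fin n) (Fin n) ℝ)
    (hS : S.PosDef) (hξ : ξ.IsSymm) :
    S + ξ + (1 / 2 : ℝ) • (ξ * S⁻¹ * ξ)
        = (1 / 2 : ℝ) • S + (1 / 2 : ℝ) • ((S + ξ) * S⁻¹ * (S + ξ)) ∧
      (S + ξ + (1 / 2 : ℝ) • (ξ * S⁻¹ * ξ)).PosSemidef ∧
      (S + ξ + (1 / 2 : ℝ) • (ξ * S⁻¹ * ξ)).PosDef := by
  have hpd : (secondOrderRetraction S ξ).PosDef :=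
    hS.secondOrderRetraction (isHermitian_iff_isSymm.mpr hξ)
  exact ⟨secondOrderRetraction_eq ((isUnit_iff_isUnit_det S).mp hS.isUnit) ξ, hpd.posSemidef, hpd⟩

theorem stmt13 {n : ℕ} (S ξ : Matrix (Fin n) (Fin n) ℝ)
    (hS : S.PosDef) (hSsymm : S.IsSymm) (hξ : ξ.IsSymm) :
    S + ξ + (1 / 2 : ℝ) • (ξ * S⁻¹ * ξ)
        = (1 / 2 : ℝ) • S + (1 / 2 : ℝ) • ((S + ξ) * S⁻¹ * (S + ξ)) ∧
      (S + ξ + (1 / 2 : ℝ) • (ξ * S⁻¹ * ξ)).PosSemidef ∧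
      (S + ξ + (1 / 2 : ℝ) • (ξ * S⁻¹ * ξ)).PosDef :=
  stmt13_general S ξ hS hξ
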